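/- (1) For a prime ideal P of A, the ideal P'^f := {(p, f(p)+j) : p ∈ P, j ∈ J} is a maximal ideal of A⋈^f J if and only if P is a maximal ideal of A. (2) For a prime ideal Q of B not containing J, the ideal Q̄^f := {(a, f(a)+j) : a ∈ A, j ∈ J, f(a)+j ∈ Q} is a maximal ideal of A⋈^f J if and only if Q is a maximal ideal of B. Consequently, the maximal ideals of A⋈^f J are exactly the ideals P'^f with P ∈ Max(A) together with the ideals Q̄^f with Q ∈ Max(B) and J ⊄ Q. -/

import Mathlib

section Amalgamation

variable {A B : Type*} [CommRing A] [CommRing B]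

/-- The amalgamation `A ⋈^f J` of `A` with `B` along the ideal `J` of `B` with respect to
the ring homomorphism `f : A → B`, realized as the subring
`{(a, f a + j) | a ∈ A, j ∈ J}` of `A × B`. -/
def amalg (f : A →+* B) (J : Ideal B) : Subring (A × B) where
  carrier := {x : A × B | x.2 - f x.1 ∈ J}
  zero_mem' := by simp
  one_mem' := by simp
  add_mem' := by
    intro x y hx hy
    simp only [Set.mem_setOf_eq, Prod.fst_add, Prod.snd_add, map_add] at *
    have h : x.2 + y.2 - (f x.1 + f y.1) = x.2 - f x.1 + (y.2 - f y.1) := by ring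
    rw [h]; exact J.add_mem hx hy
  neg_mem' := by
    intro x hx
    simp only [Set.mem_setOf_eq, Prod.fst_neg, Prod.snd_neg, map_neg] at *
    have h : -x.2 - -f x.1 = -(x.2 - f x.1) := by ring
    rw [h]; exact J.neg_mem hx
  mul_mem' := by
    intro x y hx hy
    simp only [Set.mem_setOf_eq, Prod.fst_mul, Prod.snd_mul, map_mul] at *
    have h : x.2 * y.2 - f x.1 * f y.1 = x.2 * (y.2 - f y.1) + (x.2 - f x.1) * f y.1 := by ring
    rw [h]
    exact J.add_mem (J.mul_mem_left _ hy) (J.mul_mem_right _ hx)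

lemma mem_amalg_iff (f : A →+* B) (J : Ideal B) (x : A × B) :
    x ∈ amalg f J ↔ x.2 - f x.1 ∈ J := Iff.rfl

/-- The natural projection `p_A : A ⋈^f J → A`. -/
def pA (f : A →+* B) (J : Ideal B) : amalg f J →+* A :=
  (RingHom.fst A B).comp (amalg f J).subtype

/-- The natural projection `p_B : A ⋈^f J → B`. -/
def pB (f : A →+* B) (J : Ideal B) : amalg f J →+* B :=
  (RingHom.snd A B).comp (amalg f J).subtype

/-- For an ideal `P` of `A`, the ideal `P'^f = P ⋈^f J = {(p, f p + j) | p ∈ P, j ∈ J}`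
of `A ⋈^f J`. -/
def idealPf (f : A →+* B) (J : Ideal B) (P : Ideal A) : Ideal (amalg f J) :=
  Submodule.copy (Ideal.comap (pA f J) P)
    {x : amalg f J | ∃ p ∈ P, ∃ j ∈ J, (x : A × B) = (p, f p + j)}
    (by
      ext x
      simp only [Set.mem_setOf_eq, SetLike.mem_coe, Ideal.mem_comap]
      constructor
      · rintro ⟨p, hp, j, hj, hx⟩
        have h1 : pA f J x = p := by
          show (x : A × B).1 = p
          rw [hx]
        rw [h1]; exact hp
      · intro hx
        refine ⟨(x : A × B).1, hx, (x : A × B).2 - f (x : A × B).1,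
          (mem_amalg_iff f J _).mp x.2, ?_⟩
        ext <;> simp)

/-- For an ideal `Q` of `B`, the ideal `Q̄^f = {(a, f a + j) | a ∈ A, j ∈ J, f a + j ∈ Q}`
of `A ⋈^f J`. -/
def idealQf (f : A →+* B) (J : Ideal B) (Q : Ideal B) : Ideal (amalg f J) :=
  Submodule.copy (Ideal.comap (pB f J) Q)
    {x : amalg f J | ∃ a : A, ∃ j ∈ J, (x : A × B) = (a, f a + j) ∧ f a + j ∈ Q}
    (by
      ext x
      simp only [Set.mem_setOf_eq, SetLike.mem_coe, Ideal.mem_comap]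
      constructor
      · rintro ⟨a, j, hj, hx, hQ⟩
        have h1 : pB f J x = f a + j := by
          show (x : A × B).2 = f a + j
          rw [hx]
        rw [h1]; exact hQ
      · intro hx
        refine ⟨(x : A × B).1, (x : A × B).2 - f (x : A × B).1,
          (mem_amalg_iff f J _).mp x.2, by ext <;> simp, ?_⟩
        simpa using (show (x : A × B).2 ∈ Q from hx))

end Amalgamation

/-!
The projection `pA` is surjective with kernel `{(0, j) | j ∈ J}`, so the ideals containing that
kernel are the `P'^f` and correspond to the ideals of `A`. The projection `pB` has image
`f(A) + J`, which contains the ideal `J` of `B`; away from `V(J)` this forces `Spec B` and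
`Spec (A ⋈^f J)` to agree: a prime `Q ⊉ J` is maximal iff its contraction is, and a prime `H`
missing some `(0, j₀)` is the contraction of `{b | (0, j₀ b) ∈ H}`. A maximal ideal either
contains all `(0, j)` or misses one of them.
-/

namespace Ideal

variable {R S : Type*} [CommRing R] [CommRing S]

theorem isMaximal_comap_iff_of_surjective {g : R →+* S} (hg : Function.Surjective g)
    (P : Ideal S) : (P.comap g).IsMaximal ↔ P.IsMaximal := by
  refine ⟨fun h => ?_, fun h => comap_isMaximal_of_surjective g hg⟩
  rw [← map_comap_of_surjective g hg P]
  exact h.map_of_surjective_of_ker_le hg (ker_le_comap g)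

theorem surjective_quotientMk_comp_of_le_range {g : R →+* S} {J Q : Ideal S}
    (hJ : (J : Set S) ⊆ Set.range g) (hQ : Q.IsMaximal) (hJQ : ¬ J ≤ Q) :
    Function.Surjective ((Quotient.mk Q).comp g) := by
  obtain ⟨j, hj, hjQ⟩ := SetLike.not_le_iff_exists.mp hJQ
  obtain ⟨y, q, hq, hyq⟩ := hQ.exists_inv hjQ
  intro z
  obtain ⟨b, rfl⟩ := Quotient.mk_surjective z
  obtain ⟨r, hr⟩ := hJ (J.mul_mem_left (y * b) hj)
  refine ⟨r, ?_⟩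
  rw [RingHom.comp_apply, hr, Quotient.eq]
  convert Q.neg_mem (Q.mul_mem_right b hq) using 1
  linear_combination b * hyq

theorem isMaximal_comap_iff_of_le_range {g : R →+* S} {J Q : Ideal S}
    (hJ : (J : Set S) ⊆ Set.range g) (hQ : Q.IsPrime) (hJQ : ¬ J ≤ Q) :
    (Q.comap g).IsMaximal ↔ Q.IsMaximal := by
  constructor
  · intro h
    obtain ⟨M, hM, hQM⟩ := exists_le_maximal Q hQ.ne_top
    have hcomap : Q.comap g = M.comap g := h.eq_of_le (comap_ne_top g hM.ne_top) (comap_mono hQM)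
    obtain ⟨j, hj, hjQ⟩ := SetLike.not_le_iff_exists.mp hJQ
    suffices M ≤ Q from le_antisymm hQM this ▸ hM
    intro m hm
    obtain ⟨r, hr⟩ := hJ (J.mul_mem_right m hj)
    have hrQ : r ∈ Q.comap g := by
      rw [hcomap, mem_comap, hr]
      exact M.mul_mem_left j hm
    rw [mem_comap, hr] at hrQ
    exact (hQ.mem_or_mem hrQ).resolve_left hjQ
  · intro h
    have hker : RingHom.ker ((Quotient.mk Q).comp g) = Q.comap g := by
      rw [← RingHom.comap_ker, mk_ker]
    let := Quotient.field Q
    exact hker ▸ RingHom.ker_isMaximal_of_surjective _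
      (surjective_quotientMk_comp_of_le_range hJ h hJQ)

end Ideal

namespace amalg

variable {A B : Type*} [CommRing A] [CommRing B] (f : A →+* B) {J : Ideal B}

theorem idealPf_eq_comap (P : Ideal A) : idealPf f J P = P.comap (pA f J) :=
  Submodule.copy_eq _ _ _

theorem idealQf_eq_comap (Q : Ideal B) : idealQf f J Q = Q.comap (pB f J) :=
  Submodule.copy_eq _ _ _

theorem pA_surjective : Function.Surjective (pA f J) :=
  fun a => ⟨⟨(a, f a), by simp [mem_amalg_iff]⟩, rfl⟩

theorem isMaximal_idealPf_iff (P : Ideal A) : (idealPf f J P).IsMaximal ↔ P.IsMaximal := by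
  rw [idealPf_eq_comap]
  exact Ideal.isMaximal_comap_iff_of_surjective (pA_surjective f) P

def inr {j : B} (hj : j ∈ J) : amalg f J :=
  ⟨(0, j), by simpa [mem_amalg_iff] using hj⟩

theorem inr_mul {j : B} (hj : j ∈ J) (x : amalg f J) :
    inr f hj * x = inr f (J.mul_mem_right (pB f J x) hj) :=
  Subtype.ext (Prod.ext (zero_mul _) rfl)

theorem inr_mul_inr {j k : B} (hj : j ∈ J) (hk : k ∈ J) :
    inr f hj * inr f hk = inr f (J.mul_mem_right k hj) :=
  inr_mul f hj _

theorem exists_eq_inr_of_mem_ker_pA {x : amalg f J} (hx : x ∈ RingHom.ker (pA f J)) :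
    ∃ j, ∃ hj : j ∈ J, inr f hj = x := by
  have hx₁ : (x : A × B).1 = 0 := hx
  have hj := (mem_amalg_iff f J x).mp x.2
  rw [hx₁, map_zero, sub_zero] at hj
  exact ⟨_, hj, Subtype.ext (Prod.ext hx₁.symm rfl)⟩

theorem coe_subset_range_pB : (J : Set B) ⊆ Set.range (pB f J) :=
  fun _ hj => ⟨inr f hj, rfl⟩

theorem isMaximal_idealQf_iff {Q : Ideal B} (hQ : Q.IsPrime) (hJQ : ¬ J ≤ Q) :
    (idealQf f J Q).IsMaximal ↔ Q.IsMaximal := by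
  rw [idealQf_eq_comap]
  exact Ideal.isMaximal_comap_iff_of_le_range (coe_subset_range_pB f) hQ hJQ

theorem exists_isPrime_eq_comap_pB {H : Ideal (amalg f J)} [hH : H.IsPrime] {j₀ : B}
    (hj₀ : j₀ ∈ J) (hH₀ : inr f hj₀ ∉ H) :
    ∃ Q : Ideal B, Q.IsPrime ∧ ¬ J ≤ Q ∧ H = Q.comap (pB f J) := by
  have hmul : ∀ a b : B, inr f (J.mul_mem_right a hj₀) * inr f (J.mul_mem_right b hj₀) =
      inr f hj₀ * inr f (J.mul_mem_right (a * b) hj₀) := by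
    intro a b
    simp only [inr_mul_inr]
    congr 1
    ring
  let Q : Ideal B :=
    { carrier := {b | inr f (J.mul_mem_right b hj₀) ∈ H}
      zero_mem' := by
        show inr f _ ∈ H
        convert H.zero_mem using 1
        exact Subtype.ext (Prod.ext rfl (mul_zero j₀))
      add_mem' := fun {a b} ha hb => by
        show inr f _ ∈ H
        convert H.add_mem ha hb using 1
        exact Subtype.ext (Prod.ext (add_zero 0).symm (mul_add j₀ a b))
      smul_mem' := fun c b hb => by
        have := H.mul_mem_left (inr f (J.mul_mem_right c hj₀)) hb
        rwa [hmul, Ideal.IsPrime.mul_mem_left_iff hH₀] at this }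
  have hmemQ : ∀ b, b ∈ Q ↔ inr f (J.mul_mem_right b hj₀) ∈ H := fun _ => Iff.rfl
  refine ⟨Q, ⟨?_, fun {a b} hab => ?_⟩, fun hJQ => ?_, ?_⟩
  · rw [Ideal.ne_top_iff_one, hmemQ]
    convert hH₀
    exact mul_one j₀
  · rw [hmemQ, ← Ideal.IsPrime.mul_mem_left_iff hH₀, ← hmul] at hab
    exact hH.mem_or_mem hab
  · have := (hmemQ j₀).mp (hJQ hj₀)
    rw [← inr_mul_inr f hj₀ hj₀] at this
    exact hH₀ ((hH.mem_or_mem this).elim id id)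
  · ext x
    rw [Ideal.mem_comap, hmemQ, ← inr_mul f hj₀, Ideal.IsPrime.mul_mem_left_iff hH₀]

theorem eq_idealPf_or_eq_idealQf_of_isMaximal {H : Ideal (amalg f J)} (hH : H.IsMaximal) :
    (∃ P : Ideal A, P.IsMaximal ∧ H = idealPf f J P) ∨
      (∃ Q : Ideal B, Q.IsMaximal ∧ ¬ J ≤ Q ∧ H = idealQf f J Q) := by
  by_cases hker : RingHom.ker (pA f J) ≤ H
  · refine Or.inl ⟨H.map (pA f J),
      Ideal.IsMaximal.map_of_surjective_of_ker_le (pA_surjective f) hker, ?_⟩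
    rw [idealPf_eq_comap, Ideal.comap_map_of_surjective' _ (pA_surjective f), sup_eq_left.mpr hker]
  · obtain ⟨x, hx, hxH⟩ := SetLike.not_le_iff_exists.mp hker
    obtain ⟨j, hj, rfl⟩ := exists_eq_inr_of_mem_ker_pA f hx
    have := hH.isPrime
    obtain ⟨Q, hQ, hJQ, rfl⟩ := exists_isPrime_eq_comap_pB f hj hxH
    rw [← idealQf_eq_comap] at hH ⊢
    exact Or.inr ⟨Q, (isMaximal_idealQf_iff f hQ hJQ).mp hH, hJQ, rfl⟩

end amalg

theorem stmt7 {A B : Type*} [CommRing A] [CommRing B] (f : A →+* B) (J : Ideal B) :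
    (∀ P : Ideal A, P.IsPrime → ((idealPf f J P).IsMaximal ↔ P.IsMaximal)) ∧
    (∀ Q : Ideal B, Q.IsPrime → ¬ J ≤ Q → ((idealQf f J Q).IsMaximal ↔ Q.IsMaximal)) ∧
    (∀ H : Ideal (amalg f J), H.IsMaximal ↔
      ((∃ P : Ideal A, P.IsMaximal ∧ H = idealPf f J P) ∨
       (∃ Q : Ideal B, Q.IsMaximal ∧ ¬ J ≤ Q ∧ H = idealQf f J Q))) := by
  refine ⟨fun P _ => amalg.isMaximal_idealPf_iff f P,
    fun Q hQ hJQ => amalg.isMaximal_idealQf_iff f hQ hJQ,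
    fun H => ⟨amalg.eq_idealPf_or_eq_idealQf_of_isMaximal f, ?_⟩⟩
  rintro (⟨P, hP, rfl⟩ | ⟨Q, hQ, hJQ, rfl⟩)
  · exact (amalg.isMaximal_idealPf_iff f P).mpr hP
  · exact (amalg.isMaximal_idealQf_iff f hQ.isPrime hJQ).mpr hQ
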